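/- Let Σ be symmetric positive definite with largest eigenvalue λ_max, c a vector, R(θ) = ½ θᵀΣθ - θᵀc, and θ* = Σ^{-1}c. Then for any B > 0 and any θ with ‖θ‖₂ ≤ B, R(θ) - R(θ*) ≥ ½ · max(‖Σ^{-1/2}c‖₂ - √λ_max · B, 0)². -/

import Mathlib

/-!
Write `S = Σ^{1/2}`. Completing the square, `R(θ) - R(θ*) = ½ ‖Sθ - S⁻¹c‖²`, while
`‖Sθ‖² = θᵀΣθ ≤ λ_max ‖θ‖² ≤ λ_max B²`; the reverse triangle inequality
`‖Sθ - S⁻¹c‖ ≥ ‖S⁻¹c‖ - ‖Sθ‖` finishes the proof.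
-/

open Matrix MeasureTheory BigOperators
noncomputable section

open scoped ComplexOrder in
/-- The positive semidefinite square root of a positive semidefinite matrix (as in the
older Mathlib, where it was `Matrix.PosSemidef.sqrt`). -/
noncomputable def Matrix.PosSemidef.sqrt {n : Type*} [Fintype n] [DecidableEq n] {𝕜 : Type*}
    [RCLike 𝕜] {A : Matrix n n 𝕜} (hA : A.PosSemidef) : Matrix n n 𝕜 :=
  hA.isHermitian.eigenvectorUnitary.1 * diagonal ((↑) ∘ (√·) ∘ hA.isHermitian.eigenvalues) *
    (star hA.isHermitian.eigenvectorUnitary : Matrix n n 𝕜)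

/-- Euclidean (spectral / operator) norm of a real square matrix. -/
def opN {n : Type*} [Fintype n] [DecidableEq n] (A : Matrix n n ℝ) : ℝ :=
  ‖Matrix.toEuclideanCLM (𝕜 := ℝ) A‖

/-- Euclidean norm of a vector. -/
def vN {n : Type*} [Fintype n] (v : n → ℝ) : ℝ := Real.sqrt (∑ i, v i ^ 2)

namespace Matrix.PosSemidef

open scoped ComplexOrder

variable {n 𝕜 : Type*} [Fintype n] [DecidableEq n] [RCLike 𝕜] {A : Matrix n n 𝕜}

theorem sqrt_mul_self (hA : A.PosSemidef) : hA.sqrt * hA.sqrt = A := by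
  set U : Matrix n n 𝕜 := (hA.isHermitian.eigenvectorUnitary : Matrix n n 𝕜)
  have hU : star U * U = 1 := Unitary.coe_star_mul_self hA.isHermitian.eigenvectorUnitary
  have hD : diagonal ((↑) ∘ (√·) ∘ hA.isHermitian.eigenvalues) *
      diagonal ((↑) ∘ (√·) ∘ hA.isHermitian.eigenvalues) =
      diagonal (RCLike.ofReal ∘ hA.isHermitian.eigenvalues : n → 𝕜) := by
    rw [diagonal_mul_diagonal]
    congr 1
    funext i
    simp [← RCLike.ofReal_mul, Real.mul_self_sqrt (hA.eigenvalues_nonneg i)]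
  conv_rhs => rw [hA.isHermitian.spectral_theorem, Unitary.conjStarAlgAut_apply, ← hD]
  simp only [sqrt, Matrix.mul_assoc]
  rw [← Matrix.mul_assoc (star U), hU, Matrix.one_mul]

theorem isHermitian_sqrt (hA : A.PosSemidef) : hA.sqrt.IsHermitian := by
  simp [IsHermitian, sqrt, Matrix.mul_assoc, Matrix.star_eq_conjTranspose, Pi.star_def,
    Function.comp_def]

end Matrix.PosSemidef

theorem Matrix.dotProduct_mul_self_mulVec {n R : Type*} [Fintype n] [CommSemiring R]
    {S : Matrix n n R} (hS : S.IsSymm) (x : n → R) :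
    x ⬝ᵥ ((S * S) *ᵥ x) = S *ᵥ x ⬝ᵥ S *ᵥ x := by
  rw [← mulVec_mulVec, dotProduct_mulVec, ← mulVec_transpose, hS.eq, dotProduct_comm]

section EuclideanNorm

variable {n m : Type*} [Fintype n] [Fintype m]

theorem vN_eq_norm (v : n → ℝ) : vN v = ‖WithLp.toLp 2 v‖ := by
  simp [EuclideanSpace.norm_eq, vN]

theorem sq_vN (v : n → ℝ) : vN v ^ 2 = v ⬝ᵥ v := by
  rw [vN_eq_norm, EuclideanSpace.norm_sq_eq]
  simp [dotProduct, sq]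

theorem vN_nonneg (v : n → ℝ) : 0 ≤ vN v := Real.sqrt_nonneg _

theorem vN_sub_comm (x y : n → ℝ) : vN (x - y) = vN (y - x) := by
  simp only [vN_eq_norm, WithLp.toLp_sub, norm_sub_rev]

theorem vN_sub_vN_le (x y : n → ℝ) : vN x - vN y ≤ vN (x - y) := by
  simpa only [vN_eq_norm, WithLp.toLp_sub] using norm_sub_norm_le _ _

theorem vN_le_sqrt_mul_vN {u : n → ℝ} {x : m → ℝ} {lam : ℝ}
    (h : u ⬝ᵥ u ≤ lam * (x ⬝ᵥ x)) : vN u ≤ √lam * vN x := by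
  have h' := Real.sqrt_le_sqrt h
  rwa [← sq_vN, ← sq_vN, Real.sqrt_sq (vN_nonneg _), Real.sqrt_mul' _ (sq_nonneg _),
    Real.sqrt_sq (vN_nonneg _)] at h'

end EuclideanNorm

def quadraticRisk {n K : Type*} [Fintype n] [Field K] (A : Matrix n n K) (c θ : n → K) : K :=
  1 / 2 * (θ ⬝ᵥ A *ᵥ θ) - θ ⬝ᵥ c

theorem quadraticRisk_sub_quadraticRisk_inv_mulVec {n K : Type*} [Fintype n] [DecidableEq n]
    [Field K] [CharZero K] {A : Matrix n n K} (hA : A.IsSymm) (hdet : IsUnit A.det)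
    (c θ : n → K) :
    quadraticRisk A c θ - quadraticRisk A c (A⁻¹ *ᵥ c) =
      1 / 2 * ((θ - A⁻¹ *ᵥ c) ⬝ᵥ A *ᵥ (θ - A⁻¹ *ᵥ c)) := by
  set θs := A⁻¹ *ᵥ c
  have hθs : A *ᵥ θs = c := by rw [mulVec_mulVec, mul_nonsing_inv _ hdet, one_mulVec]
  have hswap : θs ⬝ᵥ A *ᵥ θ = θ ⬝ᵥ c := by
    rw [dotProduct_mulVec, ← mulVec_transpose, hA.eq, hθs, dotProduct_comm]
  simp only [quadraticRisk, mulVec_sub, dotProduct_sub, sub_dotProduct, hswap, hθs]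
  ring

theorem Matrix.mulVec_sub_inv_mul_self_mulVec {n K : Type*} [Fintype n] [DecidableEq n]
    [Field K] {S : Matrix n n K} (hS : IsUnit S.det) (c θ : n → K) :
    S *ᵥ (θ - (S * S)⁻¹ *ᵥ c) = S *ᵥ θ - S⁻¹ *ᵥ c := by
  rw [mulVec_sub, mul_inv_rev, mulVec_mulVec, ← Matrix.mul_assoc, mul_nonsing_inv _ hS,
    Matrix.one_mul]

theorem budget_hardness_general
    {d : Type*} [Fintype d] [DecidableEq d]
    (Sig : Matrix d d ℝ) (hSig : Sig.PosDef) (c : d → ℝ)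
    (lamMax : ℝ)
    (hBound : ∀ v : d → ℝ, v ⬝ᵥ (Sig *ᵥ v) ≤ lamMax * (v ⬝ᵥ v))
    (R : (d → ℝ) → ℝ)
    (hR : ∀ θ, R θ = (1/2) * (θ ⬝ᵥ (Sig *ᵥ θ)) - θ ⬝ᵥ c)
    (θs : d → ℝ) (hθs : θs = Sig⁻¹ *ᵥ c) :
    ∀ B : ℝ, 0 < B → ∀ θ : d → ℝ, vN θ ≤ B →
      R θ - R θs ≥
        (1/2) * (max (vN ((hSig.posSemidef.sqrt)⁻¹ *ᵥ c) - Real.sqrt lamMax * B) 0) ^ 2 := by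
  intro B _ θ hθ
  set S := hSig.posSemidef.sqrt
  have hS : S.IsSymm := by simpa using hSig.posSemidef.isHermitian_sqrt
  have hSS : S * S = Sig := hSig.posSemidef.sqrt_mul_self
  have hSdet : IsUnit S.det :=
    isUnit_of_mul_isUnit_left (by rw [← det_mul, hSS]; exact hSig.det_pos.ne'.isUnit)
  have hexcess : R θ - R θs = 1 / 2 * vN (S *ᵥ θ - S⁻¹ *ᵥ c) ^ 2 := by
    have hSig' : Sig.IsSymm := by simpa using hSig.isHermitian
    rw [show R = quadraticRisk Sig c from funext hR, hθs,
      quadraticRisk_sub_quadraticRisk_inv_mulVec hSig' hSig.det_pos.ne'.isUnit, ← hSS,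
      dotProduct_mul_self_mulVec hS, mulVec_sub_inv_mul_self_mulVec hSdet, sq_vN]
  have hSθ : vN (S *ᵥ θ) ≤ √lamMax * B := by
    refine (vN_le_sqrt_mul_vN ?_).trans (by gcongr)
    simpa only [← hSS, dotProduct_mul_self_mulVec hS] using hBound θ
  rw [ge_iff_le, hexcess]
  gcongr
  refine max_le ?_ (vN_nonneg _)
  linarith [vN_sub_vN_le (S⁻¹ *ᵥ c) (S *ᵥ θ), vN_sub_comm (S⁻¹ *ᵥ c) (S *ᵥ θ)]

/-- norm-budget hardness: for `‖θ‖₂ ≤ B`,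
`R(θ) - R(θ*) ≥ ½ (‖Σ^{-1/2}c‖₂ - √λ_max B)₊²`. -/
theorem budget_hardness
    {d : Type*} [Fintype d] [DecidableEq d]
    (Sig : Matrix d d ℝ) (hSig : Sig.PosDef) (c : d → ℝ)
    (lamMax : ℝ)
    (hEig : Module.End.HasEigenvalue (Matrix.toLin' Sig) lamMax)
    (hBound : ∀ v : d → ℝ, v ⬝ᵥ (Sig *ᵥ v) ≤ lamMax * (v ⬝ᵥ v))
    (R : (d → ℝ) → ℝ)
    (hR : ∀ θ, R θ = (1/2) * (θ ⬝ᵥ (Sig *ᵥ θ)) - θ ⬝ᵥ c)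
    (θs : d → ℝ) (hθs : θs = Sig⁻¹ *ᵥ c) :
    ∀ B : ℝ, 0 < B → ∀ θ : d → ℝ, vN θ ≤ B →
      R θ - R θs ≥
        (1/2) * (max (vN ((hSig.posSemidef.sqrt)⁻¹ *ᵥ c) - Real.sqrt lamMax * B) 0) ^ 2 :=
  budget_hardness_general Sig hSig c lamMax hBound R hR θs hθs
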